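/- (Core of Theorem 3.4: the integral equation with respect to a function.) Let m ≥ 1, let α, ω, β₀, …, β_m, θ₀, …, θ_m ∈ ℂ with Re α > 0 and Re β₀ > Re β₁ > ⋯ > Re β_m ≥ 0, let T > 0, let ψ : [0,T] → ℝ be continuously differentiable with ψ(0) = 0 and ψ'(s) > 0 for all s ∈ [0,T], and let σ₁, …, σ_m, g : [0,T] → ℂ be continuous. Then there exists a unique continuous function u : [0,T] → ℂ satisfying u(t) + ∑_{i=1}^m σ_i(t)·(𝕀^{θ₀−θ_i;ψ}_{α,β₀−β_i,ω;0}u)(t) = g(t) for all t ∈ [0,T]. Moreover, u is given by the uniformly convergent series u = ∑_{k=0}^∞ (−1)^k A_ψ^k g, where A_ψ is the operator (A_ψ w)(t) = ∑_{i=1}^m σ_i(t)·(𝕀^{θ₀−θ_i;ψ}_{α,β₀−β_i,ω;0}w)(t). -/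

import Mathlib

open MeasureTheory Set Filter Topology

noncomputable section

/-- Pochhammer symbol `(θ)ₙ = θ(θ+1)⋯(θ+n−1)`. -/
def cpoch (θ : ℂ) (n : ℕ) : ℂ := ∏ k ∈ Finset.range n, (θ + k)

/-- Three-parameter (Prabhakar) Mittag-Leffler function; `1/Γ` is used as an entire function. -/
def mlThree (α β θ : ℂ) (z : ℂ) : ℂ :=
  ∑' n : ℕ, cpoch θ n * (Complex.Gamma (α * n + β))⁻¹ * z ^ n / (n.factorial : ℂ)

/-- Prabhakar fractional integral with base point `a`:
`(𝕀^θ_{α,β,ω;a} f)(t) = ∫_a^t (t−s)^{β−1} E^θ_{α,β}(ω(t−s)^α) f(s) ds`. -/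
def prabI (α β θ ω : ℂ) (a : ℝ) (f : ℝ → ℂ) (t : ℝ) : ℂ :=
  ∫ s in a..t, ((t - s : ℝ) : ℂ) ^ (β - 1) * mlThree α β θ (ω * ((t - s : ℝ) : ℂ) ^ α) * f s

/-- `m = ⌊Re β⌋ + 1`. -/
def mOrd (β : ℂ) : ℕ := ⌊β.re⌋.toNat + 1

/-- Riemann–Liouville-type Prabhakar derivative:
`(D^{RL,θ}_{α,β,ω;a} f)(t) = (d/dt)^m (𝕀^{−θ}_{α,m−β,ω;a} f)(t)` with `m = ⌊Re β⌋+1`. -/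
def prabDRL (α β θ ω : ℂ) (a : ℝ) (f : ℝ → ℂ) : ℝ → ℂ :=
  iteratedDeriv (mOrd β) (prabI α ((mOrd β : ℕ) - β) (-θ) ω a f)

/-- Caputo-type Prabhakar derivative, via the `m`-th derivative of `f`:
`(D^{C,θ}_{α,β,ω;a} f)(t) = (𝕀^{−θ}_{α,m−β,ω;a} f^{(m)})(t)`. -/
def prabDC (α β θ ω : ℂ) (a : ℝ) (f : ℝ → ℂ) : ℝ → ℂ :=
  prabI α ((mOrd β : ℕ) - β) (-θ) ω a (iteratedDeriv (mOrd β) f)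

/-- Regularized (Caputo-type) Prabhakar derivative of a continuous function:
`(D^{C,θ}_{α,β,ω;a} f)(t) = (D^{RL,θ}_{α,β,ω;a}[f − ∑_{j<m} f^{(j)}(a)(·−a)^j/j!])(t)`,
where `f^{(j)}(a)` is the (right-sided) `j`-th derivative at `a`. -/
def prabDReg (α β θ ω : ℂ) (a : ℝ) (f : ℝ → ℂ) : ℝ → ℂ :=
  prabDRL α β θ ω a
    (fun t => f t - ∑ j ∈ Finset.range (mOrd β),
      iteratedDerivWithin j f (Set.Ici a) a / (j.factorial : ℂ) * ((t - a : ℝ) : ℂ) ^ j)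

/-- Riemann–Liouville fractional integral
`(I^β_a f)(t) = (1/Γ(β)) ∫_a^t (t−s)^{β−1} f(s) ds`. -/
def rlI (β : ℂ) (a : ℝ) (f : ℝ → ℂ) (t : ℝ) : ℂ :=
  (Complex.Gamma β)⁻¹ * ∫ s in a..t, ((t - s : ℝ) : ℂ) ^ (β - 1) * f s

/-- The operator `(A w)(t) = ∑_{i=1}^m σᵢ(t) · (𝕀^{θ₀−θᵢ}_{α,β₀−βᵢ,ω;0} w)(t)`. -/
def opA (α ω : ℂ) (β θ : ℕ → ℂ) (m : ℕ) (σ : ℕ → ℝ → ℂ) (w : ℝ → ℂ) : ℝ → ℂ :=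
  fun t => ∑ i ∈ Finset.Icc 1 m, σ i t * prabI α (β 0 - β i) (θ 0 - θ i) ω 0 w t

/-- Prabhakar fractional integral with respect to a strictly increasing `C¹` function `ψ`:
`(𝕀^{θ;ψ}_{α,β,ω;a} f)(t) = ∫_a^t (ψ(t)−ψ(s))^{β−1} E^θ_{α,β}(ω(ψ(t)−ψ(s))^α) f(s) ψ'(s) ds`. -/
def prabIPsi (α β θ ω : ℂ) (a : ℝ) (ψ : ℝ → ℝ) (f : ℝ → ℂ) (t : ℝ) : ℂ :=
  ∫ s in a..t, ((ψ t - ψ s : ℝ) : ℂ) ^ (β - 1) *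
    mlThree α β θ (ω * ((ψ t - ψ s : ℝ) : ℂ) ^ α) * f s * ((deriv ψ s : ℝ) : ℂ)

/-- The operator `(A_ψ w)(t) = ∑_{i=1}^m σᵢ(t)·(𝕀^{θ₀−θᵢ;ψ}_{α,β₀−βᵢ,ω;0} w)(t)`. -/
def opAPsi (α ω : ℂ) (β θ : ℕ → ℂ) (m : ℕ) (σ : ℕ → ℝ → ℂ) (ψ : ℝ → ℝ) (w : ℝ → ℂ) :
    ℝ → ℂ :=
  fun t => ∑ i ∈ Finset.Icc 1 m, σ i t * prabIPsi α (β 0 - β i) (θ 0 - θ i) ω 0 ψ w t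

/-!
Each summand `σᵢ · 𝕀^{θ₀-θᵢ;ψ}_{α,β₀-βᵢ,ω;0}` is a Volterra operator whose kernel
`K(ψ t - ψ s)` is weakly singular, `‖K r‖ ≤ M r^(δ-1)` with `δ = min 1 (Re β₀ - Re β₁)`:
the Mittag-Leffler function is entire, because `Γ(α) Γ(αn + β) = Γ(α(n+1) + β) B(α, αn + β)`
and `B(α, y) → 0` as `y → ∞`. The substitution `v = ψ s` turns the weights into Beta integrals,
`∫₀ᵗ (ψ t - ψ s)^(δ-1) (ψ s)^γ ψ' s ds = B(δ, γ+1) (ψ t)^(γ+δ)`, so by induction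
`‖A_ψⁿ‖ ≤ (C (ψ T)^δ)ⁿ ∏_{j<n} B(δ, jδ+1)` on `C([0,T])`, where `C = ∑ᵢ Mᵢ sup ‖σᵢ‖`.
Since `B(δ, jδ+1) → 0` these bounds are summable, and the Neumann series `∑ (-A_ψ)ⁿ g`
converges to the unique solution of `u + A_ψ u = g`. That `A_ψ` preserves continuity follows by
approximating the kernel uniformly by the continuous truncations `r ↦ K (max r ε)`.
-/

lemma summable_of_norm_succ_le_mul {E : Type*} [SeminormedAddCommGroup E] [CompleteSpace E]
    {f : ℕ → E} {a : ℕ → ℝ} (ha : Tendsto a atTop (𝓝 0))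
    (hf : ∀ n, ‖f (n + 1)‖ ≤ a n * ‖f n‖) : Summable f := by
  refine summable_of_ratio_norm_eventually_le (r := 1 / 2) (by norm_num) ?_
  filter_upwards [ha.eventually (eventually_le_nhds (by norm_num : (0 : ℝ) < 1 / 2))] with n hn
  exact (hf n).trans (mul_le_mul_of_nonneg_right hn (norm_nonneg _))

def realBeta (x y : ℝ) : ℝ := ∫ t in (0 : ℝ)..1, t ^ (x - 1) * (1 - t) ^ (y - 1)

lemma realBeta_nonneg (x y : ℝ) : 0 ≤ realBeta x y :=
  intervalIntegral.integral_nonneg zero_le_one fun _ ht =>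
    mul_nonneg (Real.rpow_nonneg ht.1 _) (Real.rpow_nonneg (sub_nonneg.2 ht.2) _)

lemma tendsto_realBeta_atTop {x : ℝ} (hx : 0 < x) : Tendsto (realBeta x) atTop (𝓝 0) := by
  have hlim : Tendsto (realBeta x) atTop (𝓝 (∫ _ in (0 : ℝ)..1, (0 : ℝ))) := by
    refine intervalIntegral.tendsto_integral_filter_of_dominated_convergence (fun t => t ^ (x - 1))
      (Eventually.of_forall fun y => (by fun_prop : Measurable fun t : ℝ =>
        t ^ (x - 1) * (1 - t) ^ (y - 1)).aestronglyMeasurable) ?_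
      (intervalIntegral.intervalIntegrable_rpow' (by linarith)) ?_
    · filter_upwards [eventually_ge_atTop 1] with y hy
      refine Eventually.of_forall fun t ht => ?_
      rw [uIoc_of_le zero_le_one] at ht
      have h1t : 0 ≤ 1 - t := sub_nonneg.2 ht.2
      rw [Real.norm_of_nonneg (mul_nonneg (Real.rpow_nonneg ht.1.le _) (Real.rpow_nonneg h1t _))]
      exact mul_le_of_le_one_right (Real.rpow_nonneg ht.1.le _)
        (Real.rpow_le_one h1t (by linarith [ht.1]) (by linarith))
    · refine Eventually.of_forall fun t ht => ?_
      rw [uIoc_of_le zero_le_one] at ht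
      have hpow : Tendsto (fun y : ℝ => (1 - t) ^ (y - 1)) atTop (𝓝 0) :=
        (tendsto_rpow_atTop_of_base_lt_one _ (by linarith [ht.2]) (by linarith [ht.1])).comp
          (tendsto_atTop_add_const_right _ (-1) tendsto_id)
      simpa using hpow.const_mul (t ^ (x - 1))
  simpa using hlim

lemma norm_betaIntegral_le (u v : ℂ) : ‖Complex.betaIntegral u v‖ ≤ realBeta u.re v.re := by
  refine (intervalIntegral.norm_integral_le_integral_norm zero_le_one).trans_eq
    (intervalIntegral.integral_congr_ae ?_)
  filter_upwards [volume.ae_ne 1] with t ht1 ht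
  rw [uIoc_of_le zero_le_one] at ht
  have h1t : 0 < 1 - t := sub_pos.2 (lt_of_le_of_ne ht.2 ht1)
  rw [norm_mul, Complex.norm_cpow_eq_rpow_re_of_pos ht.1, ← Complex.ofReal_one,
    ← Complex.ofReal_sub, Complex.norm_cpow_eq_rpow_re_of_pos h1t]
  simp

lemma intervalIntegrable_sub_rpow_mul_rpow {X ρ γ : ℝ} (hρ : 0 < ρ) (hγ : 0 ≤ γ) :
    IntervalIntegrable (fun u : ℝ => (X - u) ^ (ρ - 1) * u ^ γ) volume 0 X := by
  have h : IntervalIntegrable (fun u : ℝ => (X - u) ^ (ρ - 1)) volume 0 X := by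
    simpa using ((intervalIntegral.intervalIntegrable_rpow' (r := ρ - 1) (by linarith)
      (a := 0) (b := X)).comp_sub_left X).symm
  exact h.mul_continuousOn fun u _ =>
    (Real.continuousAt_rpow_const u γ (Or.inr hγ)).continuousWithinAt

lemma integral_sub_rpow_mul_rpow {X ρ γ : ℝ} (hX : 0 ≤ X) (hρ : 0 < ρ) (hγ : 0 ≤ γ) :
    ∫ u in (0 : ℝ)..X, (X - u) ^ (ρ - 1) * u ^ γ = realBeta ρ (γ + 1) * X ^ (γ + ρ) := by
  rcases hX.eq_or_lt with rfl | hX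
  · simp [Real.zero_rpow (by linarith : γ + ρ ≠ 0)]
  have hreflect : ∫ u in (0 : ℝ)..X, (X - u) ^ (ρ - 1) * u ^ γ
      = ∫ u in (0 : ℝ)..X, u ^ (ρ - 1) * (X - u) ^ γ := by
    simpa using intervalIntegral.integral_comp_sub_left
      (fun u : ℝ => u ^ (ρ - 1) * (X - u) ^ γ) X (a := 0) (b := X)
  have hscale : ∫ u in (0 : ℝ)..X, u ^ (ρ - 1) * (X - u) ^ γ
      = X * ∫ v in (0 : ℝ)..1, (X * v) ^ (ρ - 1) * (X - X * v) ^ γ := by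
    simpa using (intervalIntegral.smul_integral_comp_mul_left
      (fun u : ℝ => u ^ (ρ - 1) * (X - u) ^ γ) X (a := 0) (b := 1)).symm
  have hfactor : ∫ v in (0 : ℝ)..1, (X * v) ^ (ρ - 1) * (X - X * v) ^ γ
      = X ^ (ρ - 1) * X ^ γ * realBeta ρ (γ + 1) := by
    rw [realBeta, add_sub_cancel_right, ← intervalIntegral.integral_const_mul]
    refine intervalIntegral.integral_congr fun v hv => ?_
    rw [uIcc_of_le zero_le_one] at hv
    rw [show X - X * v = X * (1 - v) by ring, Real.mul_rpow hX.le hv.1,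
      Real.mul_rpow hX.le (sub_nonneg.2 hv.2)]
    ring
  rw [hreflect, hscale, hfactor, show γ + ρ = 1 + (ρ - 1) + γ by ring,
    Real.rpow_add hX, Real.rpow_add hX, Real.rpow_one]
  ring

lemma summable_pow_div_norm_Gamma {α β : ℂ} (hα : 0 < α.re) (hβ : 0 < β.re) (R : ℝ) :
    Summable fun n : ℕ => R ^ n / ‖Complex.Gamma (α * n + β)‖ := by
  have hre : ∀ n : ℕ, 0 < (α * n + β).re := fun n => by simp; positivity
  have hΓ : ∀ n : ℕ, 0 < ‖Complex.Gamma (α * n + β)‖ := fun n =>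
    norm_pos_iff.2 (Complex.Gamma_ne_zero_of_re_pos (hre n))
  have hΓα : 0 < ‖Complex.Gamma α‖ := norm_pos_iff.2 (Complex.Gamma_ne_zero_of_re_pos hα)
  -- ratio test: consecutive terms differ by a factor at most `|R| B(Re α, Re(αn + β)) / ‖Γ(α)‖`
  have hrec : ∀ n : ℕ, ‖Complex.Gamma α‖ * ‖Complex.Gamma (α * n + β)‖
      = ‖Complex.Gamma (α * (n + 1 : ℕ) + β)‖ * ‖Complex.betaIntegral α (α * n + β)‖ := by
    intro n
    rw [← norm_mul, ← norm_mul, Complex.Gamma_mul_Gamma_eq_betaIntegral hα (hre n)]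
    push_cast
    ring_nf
  have hlin : Tendsto (fun n : ℕ => α.re * n + β.re) atTop atTop :=
    tendsto_atTop_add_const_right _ _ (tendsto_natCast_atTop_atTop.const_mul_atTop hα)
  refine summable_of_norm_succ_le_mul
    (a := fun n => |R| * realBeta α.re (α.re * n + β.re) / ‖Complex.Gamma α‖) ?_ fun n => ?_
  · simpa using (((tendsto_realBeta_atTop hα).comp hlin).const_mul |R|).div_const _
  have hB := norm_betaIntegral_le α (α * n + β)
  simp only [Complex.add_re, Complex.mul_re, Complex.natCast_re, Complex.natCast_im,
    mul_zero, sub_zero] at hB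
  have key : ‖Complex.Gamma α‖ * ‖Complex.Gamma (α * n + β)‖
      ≤ realBeta α.re (α.re * n + β.re) * ‖Complex.Gamma (α * (n + 1 : ℕ) + β)‖ := by
    rw [hrec n, mul_comm]
    exact mul_le_mul_of_nonneg_right hB (norm_nonneg _)
  rw [norm_div, norm_div, norm_pow, norm_pow, Real.norm_eq_abs, norm_norm, norm_norm]
  calc |R| ^ (n + 1) / ‖Complex.Gamma (α * (n + 1 : ℕ) + β)‖
      ≤ |R| ^ (n + 1) / ‖Complex.Gamma (α * (n + 1 : ℕ) + β)‖
        * (realBeta α.re (α.re * n + β.re) * ‖Complex.Gamma (α * (n + 1 : ℕ) + β)‖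
          / (‖Complex.Gamma α‖ * ‖Complex.Gamma (α * n + β)‖)) :=
        le_mul_of_one_le_right (by positivity) ((one_le_div (mul_pos hΓα (hΓ n))).2 key)
    _ = _ := by have := hΓ (n + 1); field_simp; ring

lemma norm_cpoch_le (θ : ℂ) (n : ℕ) : ‖cpoch θ n‖ ≤ max 1 ‖θ‖ ^ n * n.factorial := by
  have hq : 1 ≤ max 1 ‖θ‖ := le_max_left _ _
  calc ‖cpoch θ n‖ = ∏ k ∈ Finset.range n, ‖θ + k‖ := by rw [cpoch, norm_prod]
    _ ≤ ∏ k ∈ Finset.range n, max 1 ‖θ‖ * (k + 1 : ℝ) := by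
        refine Finset.prod_le_prod (fun _ _ => norm_nonneg _) fun k _ => ?_
        calc ‖θ + k‖ ≤ ‖θ‖ + k := by simpa using norm_add_le θ (k : ℂ)
          _ ≤ max 1 ‖θ‖ + max 1 ‖θ‖ * k := by
              gcongr
              · exact le_max_right _ _
              · exact le_mul_of_one_le_left (Nat.cast_nonneg k) hq
          _ = max 1 ‖θ‖ * (k + 1) := by ring
    _ = max 1 ‖θ‖ ^ n * n.factorial := by
        rw [Finset.prod_mul_distrib, Finset.prod_const, Finset.card_range,
          ← Finset.prod_range_add_one_eq_factorial]
        push_cast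
        rfl

lemma continuous_mlThree {α β : ℂ} (hα : 0 < α.re) (hβ : 0 < β.re) (θ : ℂ) :
    Continuous (mlThree α β θ) := by
  refine continuous_iff_continuousAt.2 fun z => ?_
  have hball : ContinuousOn (mlThree α β θ) (Metric.closedBall 0 (‖z‖ + 1)) := by
    refine continuousOn_tsum (fun n => by fun_prop)
      (summable_pow_div_norm_Gamma hα hβ (max 1 ‖θ‖ * (‖z‖ + 1))) fun n w hw => ?_
    rw [mem_closedBall_zero_iff] at hw
    have hfact : (0 : ℝ) < n.factorial := by positivity
    rw [norm_div, norm_mul, norm_mul, norm_inv, norm_pow, Complex.norm_natCast, mul_pow,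
      div_le_iff₀ hfact]
    calc ‖cpoch θ n‖ * ‖Complex.Gamma (α * n + β)‖⁻¹ * ‖w‖ ^ n
        ≤ max 1 ‖θ‖ ^ n * n.factorial * ‖Complex.Gamma (α * n + β)‖⁻¹ * (‖z‖ + 1) ^ n := by
          gcongr
          exact norm_cpoch_le θ n
      _ = _ := by ring
  exact hball.continuousAt (Metric.closedBall_mem_nhds_of_mem (by simp))

def prabKernel (α β θ ω : ℂ) (r : ℝ) : ℂ := (r : ℂ) ^ (β - 1) * mlThree α β θ (ω * (r : ℂ) ^ α)

lemma continuousOn_prabKernel {α β : ℂ} (hα : 0 < α.re) (hβ : 0 < β.re) (θ ω : ℂ) :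
    ContinuousOn (prabKernel α β θ ω) (Ioi 0) := by
  have hcpow : ∀ γ : ℂ, ContinuousOn (fun r : ℝ => (r : ℂ) ^ γ) (Ioi 0) := fun γ r hr =>
    (Complex.continuous_ofReal.continuousAt.cpow continuousAt_const
      (Complex.ofReal_mem_slitPlane.2 hr)).continuousWithinAt
  exact (hcpow _).mul ((continuous_mlThree hα hβ θ).comp_continuousOn
    (continuousOn_const.mul (hcpow α)))

lemma exists_norm_prabKernel_le {α β : ℂ} {δ : ℝ} (hα : 0 < α.re) (hδ : 0 < δ) (hδβ : δ ≤ β.re)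
    (θ ω : ℂ) (Q : ℝ) :
    ∃ M, 0 ≤ M ∧ ∀ r ∈ Ioc 0 Q, ‖prabKernel α β θ ω r‖ ≤ M * r ^ (δ - 1) := by
  obtain ⟨E, hE⟩ := (isCompact_closedBall (0 : ℂ) (‖ω‖ * Q ^ α.re)).exists_bound_of_continuousOn
    (continuous_mlThree hα (hδ.trans_le hδβ) θ).continuousOn
  refine ⟨max (E * Q ^ (β.re - δ)) 0, le_max_right _ _, fun r hr => ?_⟩
  have hpow : ‖(r : ℂ) ^ (β - 1)‖ ≤ Q ^ (β.re - δ) * r ^ (δ - 1) := by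
    rw [Complex.norm_cpow_eq_rpow_re_of_pos hr.1, Complex.sub_re, Complex.one_re,
      show β.re - 1 = (β.re - δ) + (δ - 1) by ring, Real.rpow_add hr.1]
    exact mul_le_mul_of_nonneg_right (Real.rpow_le_rpow hr.1.le hr.2 (by linarith))
      (Real.rpow_nonneg hr.1.le _)
  have harg : ω * (r : ℂ) ^ α ∈ Metric.closedBall 0 (‖ω‖ * Q ^ α.re) := by
    rw [mem_closedBall_zero_iff, norm_mul, Complex.norm_cpow_eq_rpow_re_of_pos hr.1]
    exact mul_le_mul_of_nonneg_left (Real.rpow_le_rpow hr.1.le hr.2 hα.le) (norm_nonneg _)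
  calc ‖prabKernel α β θ ω r‖ ≤ Q ^ (β.re - δ) * r ^ (δ - 1) * E := by
        rw [prabKernel, norm_mul]
        exact mul_le_mul hpow (hE _ harg) (norm_nonneg _) ((norm_nonneg _).trans hpow)
    _ = E * Q ^ (β.re - δ) * r ^ (δ - 1) := by ring
    _ ≤ _ := mul_le_mul_of_nonneg_right (le_max_left _ _) (Real.rpow_nonneg hr.1.le _)

structure IsAdmissible (ψ : ℝ → ℝ) (T : ℝ) : Prop where
  contDiff : ContDiff ℝ 1 ψ
  map_zero : ψ 0 = 0
  deriv_pos : ∀ s ∈ Icc 0 T, 0 < deriv ψ s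

namespace IsAdmissible

variable {ψ : ℝ → ℝ} {T s t : ℝ}

lemma strictMonoOn (hψ : IsAdmissible ψ T) : StrictMonoOn ψ (Icc 0 T) :=
  strictMonoOn_of_deriv_pos (convex_Icc 0 T) hψ.contDiff.continuous.continuousOn
    fun x hx => hψ.deriv_pos x (interior_subset hx)

lemma nonneg (hψ : IsAdmissible ψ T) (hs : s ∈ Icc 0 T) : 0 ≤ ψ s :=
  hψ.map_zero ▸ hψ.strictMonoOn.monotoneOn ⟨le_rfl, hs.1.trans hs.2⟩ hs hs.1

lemma le_apply_right (hψ : IsAdmissible ψ T) (hs : s ∈ Icc 0 T) : ψ s ≤ ψ T :=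
  hψ.strictMonoOn.monotoneOn hs ⟨hs.1.trans hs.2, le_rfl⟩ hs.2

lemma pos_apply_right (hψ : IsAdmissible ψ T) (hT : 0 < T) : 0 < ψ T :=
  hψ.map_zero ▸ hψ.strictMonoOn ⟨le_rfl, hT.le⟩ ⟨hT.le, le_rfl⟩ hT

lemma sub_mem_Ioc (hψ : IsAdmissible ψ T) (ht : t ∈ Icc 0 T) (hs : s ∈ Ioo 0 t) :
    ψ t - ψ s ∈ Ioc 0 (ψ T) := by
  have hsT : s ∈ Icc 0 T := ⟨hs.1.le, hs.2.le.trans ht.2⟩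
  have := hψ.strictMonoOn hsT ht hs.2
  have := hψ.nonneg hsT
  have := hψ.le_apply_right ht
  constructor <;> linarith

lemma intervalIntegrable_and_integral_weight (hψ : IsAdmissible ψ T) (ht : t ∈ Icc 0 T)
    {ρ γ : ℝ} (hρ : 0 < ρ) (hγ : 0 ≤ γ) :
    IntervalIntegrable (fun s => (ψ t - ψ s) ^ (ρ - 1) * ψ s ^ γ * deriv ψ s) volume 0 t ∧
      ∫ s in (0 : ℝ)..t, (ψ t - ψ s) ^ (ρ - 1) * ψ s ^ γ * deriv ψ s
        = realBeta ρ (γ + 1) * ψ t ^ (γ + ρ) := by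
  have hcont : ContinuousOn ψ (uIcc 0 t) := hψ.contDiff.continuous.continuousOn
  have hderiv : ∀ x ∈ Ioo (min 0 t) (max 0 t), HasDerivAt ψ (deriv ψ x) x := fun x _ =>
    (hψ.contDiff.differentiable one_ne_zero x).hasDerivAt
  have hmono : ∀ x ∈ Ioo (min 0 t) (max 0 t), 0 ≤ deriv ψ x := by
    rw [min_eq_left ht.1, max_eq_right ht.1]
    exact fun x hx => (hψ.deriv_pos x ⟨hx.1.le, hx.2.le.trans ht.2⟩).le
  set g : ℝ → ℝ := fun u => (ψ t - u) ^ (ρ - 1) * u ^ γ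
  have hcomp : (fun s => (ψ t - ψ s) ^ (ρ - 1) * ψ s ^ γ * deriv ψ s)
      = fun s => (g ∘ ψ) s * deriv ψ s := rfl
  rw [hcomp, intervalIntegral.integrable_comp_mul_deriv_iff_of_deriv_nonneg hcont hderiv hmono,
    intervalIntegral.integral_comp_mul_deriv_of_deriv_nonneg hcont hderiv hmono, hψ.map_zero]
  exact ⟨intervalIntegrable_sub_rpow_mul_rpow hρ hγ,
    integral_sub_rpow_mul_rpow (hψ.nonneg ht) hρ hγ⟩

end IsAdmissible

def psiVolterra (K : ℝ → ℂ) (ψ : ℝ → ℝ) (w : ℝ → ℂ) (t : ℝ) : ℂ :=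
  ∫ s in (0 : ℝ)..t, K (ψ t - ψ s) * w s * ((deriv ψ s : ℝ) : ℂ)

section psiVolterra

variable {K : ℝ → ℂ} {ψ : ℝ → ℝ} {w : ℝ → ℂ} {T M δ t : ℝ}

lemma psiVolterra_congr {w' : ℝ → ℂ} (h : EqOn w w' (Icc 0 T)) (ht : t ∈ Icc 0 T) :
    psiVolterra K ψ w t = psiVolterra K ψ w' t := by
  unfold psiVolterra
  refine intervalIntegral.integral_congr fun s hs => ?_
  rw [uIcc_of_le ht.1] at hs
  simp only [h ⟨hs.1, hs.2.trans ht.2⟩]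

lemma norm_psiVolterra_integrand_le (hψ : IsAdmissible ψ T)
    (hKM : ∀ r ∈ Ioc 0 (ψ T), ‖K r‖ ≤ M * r ^ (δ - 1)) {c γ : ℝ}
    (hw : ∀ s ∈ Icc 0 T, ‖w s‖ ≤ c * ψ s ^ γ) (ht : t ∈ Icc 0 T) {s : ℝ} (hs : s ∈ Ioo 0 t) :
    ‖K (ψ t - ψ s) * w s * ((deriv ψ s : ℝ) : ℂ)‖
      ≤ M * c * ((ψ t - ψ s) ^ (δ - 1) * ψ s ^ γ * deriv ψ s) := by
  have hsT : s ∈ Icc 0 T := ⟨hs.1.le, hs.2.le.trans ht.2⟩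
  have hK := hKM _ (hψ.sub_mem_Ioc ht hs)
  rw [norm_mul, norm_mul, Complex.norm_real, Real.norm_of_nonneg (hψ.deriv_pos s hsT).le]
  calc ‖K (ψ t - ψ s)‖ * ‖w s‖ * deriv ψ s
      ≤ M * (ψ t - ψ s) ^ (δ - 1) * (c * ψ s ^ γ) * deriv ψ s :=
        mul_le_mul_of_nonneg_right (mul_le_mul hK (hw s hsT) (norm_nonneg _)
          ((norm_nonneg _).trans hK)) (hψ.deriv_pos s hsT).le
    _ = _ := by ring

lemma norm_psiVolterra_le (hψ : IsAdmissible ψ T)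
    (hKM : ∀ r ∈ Ioc 0 (ψ T), ‖K r‖ ≤ M * r ^ (δ - 1)) (hδ : 0 < δ) {c γ : ℝ} (hγ : 0 ≤ γ)
    (hw : ∀ s ∈ Icc 0 T, ‖w s‖ ≤ c * ψ s ^ γ) (ht : t ∈ Icc 0 T) :
    ‖psiVolterra K ψ w t‖ ≤ M * c * realBeta δ (γ + 1) * ψ t ^ (γ + δ) := by
  obtain ⟨hint, hval⟩ := hψ.intervalIntegrable_and_integral_weight ht hδ hγ
  calc ‖psiVolterra K ψ w t‖
      ≤ ∫ s in (0 : ℝ)..t, M * c * ((ψ t - ψ s) ^ (δ - 1) * ψ s ^ γ * deriv ψ s) := by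
        refine intervalIntegral.norm_integral_le_of_norm_le ht.1 ?_ (hint.const_mul _)
        filter_upwards [volume.ae_ne t] with s hst hs
        exact norm_psiVolterra_integrand_le hψ hKM hw ht ⟨hs.1, lt_of_le_of_ne hs.2 hst⟩
    _ = _ := by rw [intervalIntegral.integral_const_mul, hval]; ring

lemma intervalIntegrable_psiVolterra_integrand (hψ : IsAdmissible ψ T)
    (hK : ContinuousOn K (Ioi 0)) (hKM : ∀ r ∈ Ioc 0 (ψ T), ‖K r‖ ≤ M * r ^ (δ - 1))
    (hδ : 0 < δ) (hw : ContinuousOn w (Icc 0 T)) (ht : t ∈ Icc 0 T) :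
    IntervalIntegrable (fun s => K (ψ t - ψ s) * w s * ((deriv ψ s : ℝ) : ℂ)) volume 0 t := by
  obtain ⟨W, hW⟩ := isCompact_Icc.exists_bound_of_continuousOn hw
  have hW' : ∀ s ∈ Icc 0 T, ‖w s‖ ≤ W * ψ s ^ (0 : ℝ) := by simpa using hW
  have hint := (intervalIntegrable_iff_integrableOn_Ioo_of_le ht.1).1
    (hψ.intervalIntegrable_and_integral_weight ht hδ le_rfl).1
  have hcont : ContinuousOn (fun s => K (ψ t - ψ s) * w s * ((deriv ψ s : ℝ) : ℂ)) (Ioo 0 t) :=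
    ((hK.comp (continuousOn_const.sub hψ.contDiff.continuous.continuousOn)
      fun s hs => (hψ.sub_mem_Ioc ht hs).1).mul
        (hw.mono fun s hs => ⟨hs.1.le, hs.2.le.trans ht.2⟩)).mul
      (Complex.continuous_ofReal.comp (hψ.contDiff.continuous_deriv le_rfl)).continuousOn
  rw [intervalIntegrable_iff_integrableOn_Ioo_of_le ht.1]
  exact (hint.const_mul (M * W)).mono' (hcont.aestronglyMeasurable measurableSet_Ioo)
    (ae_restrict_of_forall_mem measurableSet_Ioo fun s hs =>
      norm_psiVolterra_integrand_le hψ hKM hW' ht hs)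

end psiVolterra

section psiVolterra

variable {K : ℝ → ℂ} {ψ : ℝ → ℝ} {w : ℝ → ℂ} {T M δ t : ℝ}

lemma psiVolterra_add (hψ : IsAdmissible ψ T) (hK : ContinuousOn K (Ioi 0))
    (hKM : ∀ r ∈ Ioc 0 (ψ T), ‖K r‖ ≤ M * r ^ (δ - 1)) (hδ : 0 < δ) {w' : ℝ → ℂ}
    (hw : ContinuousOn w (Icc 0 T)) (hw' : ContinuousOn w' (Icc 0 T)) (ht : t ∈ Icc 0 T) :
    psiVolterra K ψ (w + w') t = psiVolterra K ψ w t + psiVolterra K ψ w' t := by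
  simp only [psiVolterra, ← intervalIntegral.integral_add
    (intervalIntegrable_psiVolterra_integrand hψ hK hKM hδ hw ht)
    (intervalIntegrable_psiVolterra_integrand hψ hK hKM hδ hw' ht), Pi.add_apply, mul_add, add_mul]

lemma psiVolterra_smul (a : ℂ) : psiVolterra K ψ (a • w) t = a * psiVolterra K ψ w t := by
  simp only [psiVolterra, ← intervalIntegral.integral_const_mul, Pi.smul_apply, smul_eq_mul]
  congr 1
  ext s
  ring

lemma psiVolterra_sub_kernel (hψ : IsAdmissible ψ T) {K' : ℝ → ℂ} {M' : ℝ}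
    (hK : ContinuousOn K (Ioi 0)) (hKM : ∀ r ∈ Ioc 0 (ψ T), ‖K r‖ ≤ M * r ^ (δ - 1))
    (hK' : ContinuousOn K' (Ioi 0)) (hKM' : ∀ r ∈ Ioc 0 (ψ T), ‖K' r‖ ≤ M' * r ^ (δ - 1))
    (hδ : 0 < δ) (hw : ContinuousOn w (Icc 0 T)) (ht : t ∈ Icc 0 T) :
    psiVolterra K ψ w t - psiVolterra K' ψ w t = psiVolterra (K - K') ψ w t := by
  simp only [psiVolterra, ← intervalIntegral.integral_sub
    (intervalIntegrable_psiVolterra_integrand hψ hK hKM hδ hw ht)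
    (intervalIntegrable_psiVolterra_integrand hψ hK' hKM' hδ hw ht), Pi.sub_apply, sub_mul]

lemma continuous_psiVolterra (hψ : ContDiff ℝ 1 ψ) (hK : Continuous K) (hw : Continuous w) :
    Continuous (psiVolterra K ψ w) := by
  have := hψ.continuous
  have := hψ.continuous_deriv le_rfl
  exact intervalIntegral.continuous_parametric_intervalIntegral_of_continuous
    (by fun_prop) continuous_id

lemma norm_comp_max_le {Q ε : ℝ} (hKM : ∀ r ∈ Ioc 0 Q, ‖K r‖ ≤ M * r ^ (δ - 1)) (hδ1 : δ ≤ 1)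
    (hε : 0 < ε) (hεQ : ε ≤ Q) {r : ℝ} (hr : r ∈ Ioc 0 Q) :
    ‖K (max r ε)‖ ≤ M * r ^ (δ - 1) := by
  have hmax : max r ε ∈ Ioc 0 Q := ⟨hε.trans_le (le_max_right _ _), max_le hr.2 hεQ⟩
  have hK := hKM _ hmax
  have hM : 0 ≤ M := nonneg_of_mul_nonneg_left ((norm_nonneg _).trans hK)
    (Real.rpow_pos_of_pos hmax.1 _)
  exact hK.trans (mul_le_mul_of_nonneg_left
    (Real.rpow_le_rpow_of_nonpos hr.1 (le_max_left _ _) (by linarith)) hM)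

lemma norm_sub_comp_max_le {Q ε : ℝ} (hKM : ∀ r ∈ Ioc 0 Q, ‖K r‖ ≤ M * r ^ (δ - 1))
    (hδ : 0 < δ) (hδ1 : δ ≤ 1) (hε : 0 < ε) (hεQ : ε ≤ Q) {r : ℝ} (hr : r ∈ Ioc 0 Q) :
    ‖K r - K (max r ε)‖ ≤ 2 * M * ε ^ (δ / 2) * r ^ (δ / 2 - 1) := by
  have hK := hKM r hr
  have hM : 0 ≤ M := nonneg_of_mul_nonneg_left ((norm_nonneg _).trans hK)
    (Real.rpow_pos_of_pos hr.1 _)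
  rcases le_or_gt ε r with hεr | hrε
  · rw [max_eq_left hεr, sub_self, norm_zero]
    exact mul_nonneg (mul_nonneg (mul_nonneg zero_le_two hM) (Real.rpow_nonneg hε.le _))
      (Real.rpow_nonneg hr.1.le _)
  have hKε := hKM ε ⟨hε, hεQ⟩
  rw [max_eq_right hrε.le]
  calc ‖K r - K ε‖ ≤ M * r ^ (δ - 1) + M * r ^ (δ - 1) :=
        (norm_sub_le _ _).trans (add_le_add hK (hKε.trans (mul_le_mul_of_nonneg_left
          (Real.rpow_le_rpow_of_nonpos hr.1 hrε.le (by linarith)) hM)))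
    _ = 2 * M * r ^ (δ / 2) * r ^ (δ / 2 - 1) := by
        rw [mul_assoc (2 * M), ← Real.rpow_add hr.1]
        ring_nf
    _ ≤ _ := by
        have := hr.1.le
        gcongr

lemma norm_sub_psiVolterra_comp_max_le (hψ : IsAdmissible ψ T) (hK : ContinuousOn K (Ioi 0))
    (hKM : ∀ r ∈ Ioc 0 (ψ T), ‖K r‖ ≤ M * r ^ (δ - 1)) (hδ : 0 < δ) (hδ1 : δ ≤ 1)
    (hw : ContinuousOn w (Icc 0 T)) {W : ℝ} (hW : ∀ s ∈ Icc 0 T, ‖w s‖ ≤ W) {ε : ℝ}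
    (hε : ε ∈ Ioc 0 (ψ T)) (ht : t ∈ Icc 0 T) :
    ‖psiVolterra K ψ w t - psiVolterra (fun r => K (max r ε)) ψ w t‖
      ≤ 2 * M * W * realBeta (δ / 2) 1 * ψ T ^ (δ / 2) * ε ^ (δ / 2) := by
  have hP : 0 < ψ T := hε.1.trans_le hε.2
  have hM : 0 ≤ M := nonneg_of_mul_nonneg_left ((norm_nonneg _).trans (hKM _ ⟨hP, le_rfl⟩))
    (Real.rpow_pos_of_pos hP _)
  have hW0 : 0 ≤ W := (norm_nonneg _).trans (hW t ht)
  have hKε : ContinuousOn (fun r => K (max r ε)) (Ioi 0) :=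
    hK.comp (continuous_id.max continuous_const).continuousOn fun _ _ => lt_max_of_lt_right hε.1
  rw [psiVolterra_sub_kernel hψ hK hKM hKε (fun r hr => norm_comp_max_le hKM hδ1 hε.1 hε.2 hr)
    hδ hw ht]
  refine (norm_psiVolterra_le hψ (fun r hr => norm_sub_comp_max_le hKM hδ hδ1 hε.1 hε.2 hr)
    (half_pos hδ) le_rfl (by simpa using hW) ht).trans ?_
  rw [zero_add, zero_add]
  calc 2 * M * ε ^ (δ / 2) * W * realBeta (δ / 2) 1 * ψ t ^ (δ / 2)
      ≤ 2 * M * ε ^ (δ / 2) * W * realBeta (δ / 2) 1 * ψ T ^ (δ / 2) := by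
        have := realBeta_nonneg (δ / 2) 1
        have := hψ.nonneg ht
        have := hψ.le_apply_right ht
        have := hε.1.le
        gcongr
    _ = _ := by ring

lemma continuousOn_psiVolterra (hψ : IsAdmissible ψ T) (hK : ContinuousOn K (Ioi 0))
    (hKM : ∀ r ∈ Ioc 0 (ψ T), ‖K r‖ ≤ M * r ^ (δ - 1)) (hδ : 0 < δ) (hδ1 : δ ≤ 1)
    (hw : ContinuousOn w (Icc 0 T)) : ContinuousOn (psiVolterra K ψ w) (Icc 0 T) := by
  rcases le_or_gt T 0 with hT | hT
  · exact (subsingleton_Icc_of_ge hT).continuousOn _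
  set v := IccExtend hT.le ((Icc 0 T).domRestrict w)
  have hv : Continuous v := continuous_IccExtend_iff.2 hw.domRestrict
  refine ContinuousOn.congr (f := psiVolterra K ψ v) ?_ fun t ht =>
    psiVolterra_congr (fun s hs => (IccExtend_of_mem hT.le ((Icc 0 T).domRestrict w) hs).symm) ht
  obtain ⟨W, hW⟩ := isCompact_Icc.exists_bound_of_continuousOn hv.continuousOn
  set C := 2 * M * W * realBeta (δ / 2) 1 * ψ T ^ (δ / 2)
  have hlim : Tendsto (fun ε => C * ε ^ (δ / 2)) (𝓝[>] 0) (𝓝 0) := by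
    simpa [Real.zero_rpow (half_pos hδ).ne'] using
      ((Real.continuousAt_rpow_const 0 (δ / 2) (Or.inr (half_pos hδ).le)).tendsto.const_mul
        C).mono_left nhdsWithin_le_nhds
  refine TendstoUniformlyOn.continuousOn (p := 𝓝[>] (0 : ℝ))
    (F := fun ε => psiVolterra (fun r => K (max r ε)) ψ v) ?_
    ((eventually_mem_nhdsWithin (a := (0 : ℝ)) (s := Ioi 0)).mono fun ε hε =>
      (continuous_psiVolterra hψ.contDiff (hK.comp_continuous (continuous_id.max continuous_const)
        fun _ => mem_Ioi.2 (lt_max_of_lt_right hε)) hv).continuousOn).frequently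
  refine Metric.tendstoUniformlyOn_iff.2 fun η hη => ?_
  filter_upwards [hlim.eventually (gt_mem_nhds hη), Ioc_mem_nhdsGT (hψ.pos_apply_right hT)]
    with ε hεη hε t ht
  rw [dist_eq_norm]
  exact (norm_sub_psiVolterra_comp_max_le hψ hK hKM hδ hδ1 hv.continuousOn hW hε ht).trans_lt hεη

end psiVolterra

def volterraSum {ι : Type*} (s : Finset ι) (σ K : ι → ℝ → ℂ) (ψ : ℝ → ℝ) (w : ℝ → ℂ) (t : ℝ) :
    ℂ :=
  ∑ i ∈ s, σ i t * psiVolterra (K i) ψ w t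

section volterraSum

variable {ι : Type*} {s : Finset ι} {σ K : ι → ℝ → ℂ} {ψ : ℝ → ℝ} {w : ℝ → ℂ} {M : ι → ℝ}
  {T δ t : ℝ}

lemma volterraSum_congr {w' : ℝ → ℂ} (h : EqOn w w' (Icc 0 T)) (ht : t ∈ Icc 0 T) :
    volterraSum s σ K ψ w t = volterraSum s σ K ψ w' t :=
  Finset.sum_congr rfl fun _ _ => by rw [psiVolterra_congr h ht]

lemma continuousOn_volterraSum (hψ : IsAdmissible ψ T) (hσ : ∀ i ∈ s, ContinuousOn (σ i) (Icc 0 T))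
    (hK : ∀ i ∈ s, ContinuousOn (K i) (Ioi 0))
    (hKM : ∀ i ∈ s, ∀ r ∈ Ioc 0 (ψ T), ‖K i r‖ ≤ M i * r ^ (δ - 1)) (hδ : 0 < δ) (hδ1 : δ ≤ 1)
    (hw : ContinuousOn w (Icc 0 T)) : ContinuousOn (volterraSum s σ K ψ w) (Icc 0 T) :=
  continuousOn_finsetSum _ fun i hi =>
    (hσ i hi).mul (continuousOn_psiVolterra hψ (hK i hi) (hKM i hi) hδ hδ1 hw)

lemma volterraSum_add (hψ : IsAdmissible ψ T) (hK : ∀ i ∈ s, ContinuousOn (K i) (Ioi 0))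
    (hKM : ∀ i ∈ s, ∀ r ∈ Ioc 0 (ψ T), ‖K i r‖ ≤ M i * r ^ (δ - 1)) (hδ : 0 < δ) {w' : ℝ → ℂ}
    (hw : ContinuousOn w (Icc 0 T)) (hw' : ContinuousOn w' (Icc 0 T)) (ht : t ∈ Icc 0 T) :
    volterraSum s σ K ψ (w + w') t = volterraSum s σ K ψ w t + volterraSum s σ K ψ w' t := by
  rw [volterraSum, volterraSum, volterraSum, ← Finset.sum_add_distrib]
  refine Finset.sum_congr rfl fun i hi => ?_
  rw [psiVolterra_add hψ (hK i hi) (hKM i hi) hδ hw hw' ht, mul_add]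

lemma volterraSum_smul (a : ℂ) :
    volterraSum s σ K ψ (a • w) t = a * volterraSum s σ K ψ w t := by
  rw [volterraSum, volterraSum, Finset.mul_sum]
  refine Finset.sum_congr rfl fun i _ => ?_
  rw [psiVolterra_smul]
  ring

lemma norm_volterraSum_le (hψ : IsAdmissible ψ T) {S : ι → ℝ}
    (hS : ∀ i ∈ s, ∀ t ∈ Icc 0 T, ‖σ i t‖ ≤ S i)
    (hKM : ∀ i ∈ s, ∀ r ∈ Ioc 0 (ψ T), ‖K i r‖ ≤ M i * r ^ (δ - 1)) (hδ : 0 < δ) {c γ : ℝ}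
    (hγ : 0 ≤ γ) (hw : ∀ s ∈ Icc 0 T, ‖w s‖ ≤ c * ψ s ^ γ) (ht : t ∈ Icc 0 T) :
    ‖volterraSum s σ K ψ w t‖
      ≤ (∑ i ∈ s, S i * M i) * c * realBeta δ (γ + 1) * ψ t ^ (γ + δ) := by
  simp only [Finset.sum_mul]
  refine (norm_sum_le _ _).trans (Finset.sum_le_sum fun i hi => ?_)
  have hV := norm_psiVolterra_le hψ (hKM i hi) hδ hγ hw ht
  rw [norm_mul]
  calc ‖σ i t‖ * ‖psiVolterra (K i) ψ w t‖
      ≤ S i * (M i * c * realBeta δ (γ + 1) * ψ t ^ (γ + δ)) :=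
        mul_le_mul (hS i hi t ht) hV (norm_nonneg _) ((norm_nonneg _).trans (hS i hi t ht))
    _ = _ := by ring

end volterraSum

section Neumann

variable {𝕜 E : Type*} [NormedField 𝕜] [NormedAddCommGroup E] [NormedSpace 𝕜 E]

lemma neg_pow_apply (A : E →L[𝕜] E) (n : ℕ) (x : E) :
    ((-A) ^ n) x = (-1 : 𝕜) ^ n • (A ^ n) x := by
  induction n with
  | zero => simp
  | succ n ih =>
    rw [pow_succ', mul_apply_eq_comp, ih, pow_succ' A, mul_apply_eq_comp, neg_apply, map_smul,
      pow_succ', mul_smul, neg_one_smul]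

theorem exists_hasSum_neg_pow_apply [CompleteSpace E] (A : E →L[𝕜] E) {d : ℕ → ℝ}
    (hd : Summable d) (hA : ∀ n x, ‖(A ^ n) x‖ ≤ d n * ‖x‖) (g : E) :
    ∃ x, HasSum (fun n => ((-A) ^ n) g) x ∧ x + A x = g ∧ ∀ y, y + A y = g → y = x := by
  have hnorm : ∀ n y, ‖((-A) ^ n) y‖ ≤ d n * ‖y‖ := fun n y => by
    rw [neg_pow_apply, norm_smul, norm_pow, norm_neg, norm_one, one_pow, one_mul]
    exact hA n y
  have hsum : Summable fun n => ((-A) ^ n) g :=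
    Summable.of_norm_bounded (hd.mul_right ‖g‖) fun n => hnorm n g
  have hshift : ∀ n, A (((-A) ^ n) g) = -((-A) ^ (n + 1)) g := fun n => by
    rw [pow_succ', mul_apply_eq_comp, neg_apply, neg_neg]
  have hx : (∑' n, ((-A) ^ n) g) + A (∑' n, ((-A) ^ n) g) = g := by
    rw [A.map_tsum hsum, hsum.tsum_eq_zero_add]
    simp only [hshift, tsum_neg, pow_zero, one_apply_eq_self]
    abel
  refine ⟨_, hsum.hasSum, hx, fun y hy => ?_⟩
  set x := ∑' n, ((-A) ^ n) g
  have hfix : ∀ n, ((-A) ^ n) (y - x) = y - x := by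
    have h1 : (-A) (y - x) = y - x := by
      rw [neg_apply, map_sub, eq_sub_of_add_eq' hy, eq_sub_of_add_eq' hx]
      abel
    intro n
    induction n with
    | zero => rfl
    | succ n ih => rw [pow_succ', mul_apply_eq_comp, ih, h1]
  have hle : ‖y - x‖ ≤ 0 := by
    refine ge_of_tendsto' (by simpa using hd.tendsto_atTop_zero.mul_const ‖y - x‖) fun n => ?_
    simpa only [hfix n] using hnorm n (y - x)
  exact sub_eq_zero.1 (norm_le_zero_iff.1 hle)

end Neumann

lemma summable_pow_mul_prod_realBeta {δ : ℝ} (hδ : 0 < δ) (a : ℝ) :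
    Summable fun n : ℕ => a ^ n * ∏ j ∈ Finset.range n, realBeta δ (j * δ + 1) := by
  have hlin : Tendsto (fun n : ℕ => (n : ℝ) * δ + 1) atTop atTop :=
    tendsto_atTop_add_const_right _ _ (tendsto_natCast_atTop_atTop.atTop_mul_const hδ)
  refine summable_of_norm_succ_le_mul (a := fun n => |a| * realBeta δ (n * δ + 1))
    (by simpa using ((tendsto_realBeta_atTop hδ).comp hlin).const_mul |a|) fun n => le_of_eq ?_
  rw [Finset.prod_range_succ, pow_succ, norm_mul, norm_mul, norm_mul, norm_mul, norm_pow,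
    Real.norm_eq_abs, Real.norm_of_nonneg (realBeta_nonneg _ _)]
  ring

section extend

variable {T : ℝ} {L : (ℝ → ℂ) → ℝ → ℂ}

theorem exists_clm_apply_eq_extend (hT : 0 ≤ T)
    (hcont : ∀ w, ContinuousOn w (Icc 0 T) → ContinuousOn (L w) (Icc 0 T))
    (hadd : ∀ w w', ContinuousOn w (Icc 0 T) → ContinuousOn w' (Icc 0 T) →
      ∀ t ∈ Icc 0 T, L (w + w') t = L w t + L w' t)
    (hsmul : ∀ (a : ℂ) w, ∀ t ∈ Icc 0 T, L (a • w) t = a * L w t) {C : ℝ}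
    (hbound : ∀ w W, (∀ s ∈ Icc 0 T, ‖w s‖ ≤ W) → ∀ t ∈ Icc 0 T, ‖L w t‖ ≤ C * W) :
    ∃ A : C(Icc 0 T, ℂ) →L[ℂ] C(Icc 0 T, ℂ), ∀ f x, A f x = L (IccExtend hT f) x := by
  have hext : ∀ f : C(Icc 0 T, ℂ), ContinuousOn (IccExtend hT f) (Icc 0 T) := fun f =>
    (continuous_IccExtend_iff.2 f.continuous).continuousOn
  let A : C(Icc 0 T, ℂ) →ₗ[ℂ] C(Icc 0 T, ℂ) :=
    { toFun := fun f => ⟨(Icc 0 T).domRestrict (L (IccExtend hT f)), (hcont _ (hext f)).domRestrict⟩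
      map_add' := fun f f' => by
        ext x
        exact hadd _ _ (hext f) (hext f') x x.2
      map_smul' := fun a f => by
        ext x
        exact hsmul a _ x x.2 }
  have : Nonempty (Icc 0 T) := ⟨⟨0, le_rfl, hT⟩⟩
  refine ⟨A.mkContinuous C fun f => (ContinuousMap.norm_le_of_nonempty _).2 fun x =>
    hbound _ _ (fun s hs => ?_) x x.2, fun f x => rfl⟩
  rw [IccExtend_of_mem hT _ hs]
  exact f.norm_coe_le_norm _

theorem norm_pow_le_of_extend (hT : 0 ≤ T) {A : C(Icc 0 T, ℂ) →L[ℂ] C(Icc 0 T, ℂ)}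
    (hA : ∀ f x, A f x = L (IccExtend hT f) x) {ψ : ℝ → ℝ} (hψ : MonotoneOn ψ (Icc 0 T))
    (hψ0 : 0 ≤ ψ 0) {C δ : ℝ} (hC : 0 ≤ C) (hδ : 0 ≤ δ)
    (hnorm : ∀ w c γ, 0 ≤ γ → (∀ s ∈ Icc 0 T, ‖w s‖ ≤ c * ψ s ^ γ) →
      ∀ t ∈ Icc 0 T, ‖L w t‖ ≤ C * c * realBeta δ (γ + 1) * ψ t ^ (γ + δ))
    (n : ℕ) (f : C(Icc 0 T, ℂ)) :
    ‖(A ^ n) f‖ ≤ (C * ψ T ^ δ) ^ n * (∏ j ∈ Finset.range n, realBeta δ (j * δ + 1)) * ‖f‖ := by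
  have hpointwise : ∀ n (x : Icc 0 T), ‖(A ^ n) f x‖
      ≤ ‖f‖ * C ^ n * (∏ j ∈ Finset.range n, realBeta δ (j * δ + 1)) * ψ x ^ (n * δ) := by
    intro n
    induction n with
    | zero => simpa using f.norm_coe_le_norm
    | succ n ih =>
      intro x
      rw [pow_succ', mul_apply_eq_comp, hA]
      refine (hnorm _ (‖f‖ * C ^ n * ∏ j ∈ Finset.range n, realBeta δ (j * δ + 1)) (n * δ)
        (by positivity) (fun s hs => ?_) x x.2).trans_eq ?_
      · rw [IccExtend_of_mem hT _ hs]
        exact ih ⟨s, hs⟩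
      · rw [Finset.prod_range_succ, pow_succ, Nat.cast_succ, add_one_mul]
        ring
  have h0 : (0 : ℝ) ∈ Icc 0 T := ⟨le_rfl, hT⟩
  have : Nonempty (Icc 0 T) := ⟨⟨0, h0⟩⟩
  have hprod := Finset.prod_nonneg fun j (_ : j ∈ Finset.range n) => realBeta_nonneg δ (j * δ + 1)
  refine (ContinuousMap.norm_le_of_nonempty _).2 fun x => (hpointwise n x).trans ?_
  have hψx : 0 ≤ ψ x := hψ0.trans (hψ h0 x.2 x.2.1)
  calc ‖f‖ * C ^ n * (∏ j ∈ Finset.range n, realBeta δ (j * δ + 1)) * ψ x ^ (n * δ)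
      ≤ ‖f‖ * C ^ n * (∏ j ∈ Finset.range n, realBeta δ (j * δ + 1)) * ψ T ^ (n * δ) :=
        mul_le_mul_of_nonneg_left
          (Real.rpow_le_rpow hψx (hψ x.2 ⟨hT, le_rfl⟩ x.2.2) (by positivity))
          (mul_nonneg (mul_nonneg (norm_nonneg _) (pow_nonneg hC n)) hprod)
    _ = _ := by
        rw [mul_comm (n : ℝ) δ, Real.rpow_mul (hψx.trans (hψ x.2 ⟨hT, le_rfl⟩ x.2.2)),
          Real.rpow_natCast]
        ring

theorem exists_solution_of_extend (hT : 0 ≤ T)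
    (hlocal : ∀ w w', EqOn w w' (Icc 0 T) → ∀ t ∈ Icc 0 T, L w t = L w' t)
    {A : C(Icc 0 T, ℂ) →L[ℂ] C(Icc 0 T, ℂ)} (hA : ∀ f x, A f x = L (IccExtend hT f) x)
    {d : ℕ → ℝ} (hd : Summable d) (hAd : ∀ n f, ‖(A ^ n) f‖ ≤ d n * ‖f‖) {g : ℝ → ℂ}
    (hg : ContinuousOn g (Icc 0 T)) :
    ∃ u : ℝ → ℂ, ContinuousOn u (Icc 0 T) ∧ (∀ t ∈ Icc 0 T, u t + L u t = g t) ∧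
      (∀ u' : ℝ → ℂ, ContinuousOn u' (Icc 0 T) → (∀ t ∈ Icc 0 T, u' t + L u' t = g t) →
        EqOn u' u (Icc 0 T)) ∧
      TendstoUniformlyOn (fun N t => ∑ n ∈ Finset.range N, (-1 : ℂ) ^ n * L^[n] g t) u atTop
        (Icc 0 T) := by
  let res : ∀ w, ContinuousOn w (Icc 0 T) → C(Icc 0 T, ℂ) := fun w hw =>
    ⟨(Icc 0 T).domRestrict w, hw.domRestrict⟩
  have hres : ∀ w hw (x : Icc 0 T), res w hw x = w x := fun _ _ _ => rfl
  have hAres : ∀ w hw (x : Icc 0 T), A (res w hw) x = L w x := fun w hw x =>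
    (hA _ x).trans (hlocal _ _ (fun t ht => IccExtend_of_mem hT _ ht) x x.2)
  obtain ⟨u, hsum, hsol, huniq⟩ := exists_hasSum_neg_pow_apply A hd hAd (res g hg)
  have hiter : ∀ n (x : Icc 0 T), (A ^ n) (res g hg) x = L^[n] g x := by
    intro n
    induction n with
    | zero => exact fun x => rfl
    | succ n ih =>
      intro x
      rw [pow_succ', mul_apply_eq_comp, hA, Function.iterate_succ_apply']
      exact hlocal _ _ (fun t ht => (IccExtend_of_mem hT _ ht).trans (ih ⟨t, ht⟩)) x x.2
  refine ⟨IccExtend hT u, (continuous_IccExtend_iff.2 u.continuous).continuousOn,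
    fun t ht => ?_, fun u' hu' hsol' t ht => ?_, ?_⟩
  · have := congrArg (· ⟨t, ht⟩) hsol
    simpa [IccExtend_of_mem hT _ ht, hA, hres] using this
  · have : res u' hu' + A (res u' hu') = res g hg := by
      ext x
      simpa [hAres, hres] using hsol' x x.2
    rw [IccExtend_of_mem hT _ ht, ← huniq _ this]
    rfl
  · rw [tendstoUniformlyOn_iff_tendstoUniformly_comp_coe]
    have hsums : (fun N (x : Icc 0 T) => ∑ n ∈ Finset.range N, (-1 : ℂ) ^ n * L^[n] g x)
        = fun N x => (∑ n ∈ Finset.range N, ((-A) ^ n) (res g hg)) x := by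
      ext N x
      simp only [ContinuousMap.sum_apply, neg_pow_apply, ContinuousMap.smul_apply, hiter,
        smul_eq_mul]
    rw [hsums, show IccExtend hT u ∘ Subtype.val = u from funext (IccExtend_val hT u)]
    exact ContinuousMap.tendsto_iff_tendstoUniformly.1 hsum.tendsto_sum_nat

end extend

theorem exists_solution_add_volterraSum_eq {ι : Type*} {s : Finset ι} {σ K : ι → ℝ → ℂ}
    {ψ : ℝ → ℝ} {M : ι → ℝ} {T δ : ℝ} (hT : 0 ≤ T) (hψ : IsAdmissible ψ T)
    (hσ : ∀ i ∈ s, ContinuousOn (σ i) (Icc 0 T)) (hK : ∀ i ∈ s, ContinuousOn (K i) (Ioi 0))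
    (hKM : ∀ i ∈ s, ∀ r ∈ Ioc 0 (ψ T), ‖K i r‖ ≤ M i * r ^ (δ - 1)) (hM : ∀ i ∈ s, 0 ≤ M i)
    (hδ : 0 < δ) (hδ1 : δ ≤ 1) {g : ℝ → ℂ} (hg : ContinuousOn g (Icc 0 T)) :
    ∃ u : ℝ → ℂ, ContinuousOn u (Icc 0 T) ∧
      (∀ t ∈ Icc 0 T, u t + volterraSum s σ K ψ u t = g t) ∧
      (∀ u' : ℝ → ℂ, ContinuousOn u' (Icc 0 T) →
        (∀ t ∈ Icc 0 T, u' t + volterraSum s σ K ψ u' t = g t) → EqOn u' u (Icc 0 T)) ∧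
      TendstoUniformlyOn
        (fun N t => ∑ n ∈ Finset.range N, (-1 : ℂ) ^ n * (volterraSum s σ K ψ)^[n] g t) u atTop
        (Icc 0 T) := by
  have h0 : (0 : ℝ) ∈ Icc 0 T := ⟨le_rfl, hT⟩
  obtain ⟨S, hS0, hS⟩ : ∃ S : ι → ℝ, (∀ i ∈ s, 0 ≤ S i) ∧
      ∀ i ∈ s, ∀ t ∈ Icc 0 T, ‖σ i t‖ ≤ S i := by
    choose! S hS using fun i hi => isCompact_Icc.exists_bound_of_continuousOn (hσ i hi)
    exact ⟨S, fun i hi => (norm_nonneg _).trans (hS i hi 0 h0), hS⟩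
  set C := ∑ i ∈ s, S i * M i
  have hC : 0 ≤ C := Finset.sum_nonneg fun i hi => mul_nonneg (hS0 i hi) (hM i hi)
  have hnorm : ∀ w c γ, 0 ≤ γ → (∀ s ∈ Icc 0 T, ‖w s‖ ≤ c * ψ s ^ γ) →
      ∀ t ∈ Icc 0 T, ‖volterraSum s σ K ψ w t‖ ≤ C * c * realBeta δ (γ + 1) * ψ t ^ (γ + δ) :=
    fun w c γ hγ hw t ht => norm_volterraSum_le hψ hS hKM hδ hγ hw ht
  obtain ⟨A, hA⟩ := exists_clm_apply_eq_extend hT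
    (fun w hw => continuousOn_volterraSum hψ hσ hK hKM hδ hδ1 hw)
    (fun w w' hw hw' t ht => volterraSum_add hψ hK hKM hδ hw hw' ht)
    (fun a w t _ => volterraSum_smul a) (C := C * realBeta δ 1 * ψ T ^ δ)
    fun w W hW t ht => by
      have hW0 : 0 ≤ W := (norm_nonneg _).trans (hW 0 h0)
      have := realBeta_nonneg δ 1
      refine (hnorm w W 0 le_rfl (by simpa using hW) t ht).trans ?_
      rw [zero_add, zero_add]
      calc C * W * realBeta δ 1 * ψ t ^ δ ≤ C * W * realBeta δ 1 * ψ T ^ δ :=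
            mul_le_mul_of_nonneg_left
              (Real.rpow_le_rpow (hψ.nonneg ht) (hψ.le_apply_right ht) hδ.le)
              (mul_nonneg (mul_nonneg hC hW0) this)
        _ = _ := by ring
  exact exists_solution_of_extend (L := volterraSum s σ K ψ) hT
    (fun w w' h t ht => volterraSum_congr h ht) hA
    (summable_pow_mul_prod_realBeta hδ (C * ψ T ^ δ))
    (norm_pow_le_of_extend hT hA hψ.strictMonoOn.monotoneOn hψ.map_zero.ge hC hδ.le hnorm) hg

theorem integral_equation_wrt_function_unique_solution_general (m : ℕ) (hm : 1 ≤ m) (α ω : ℂ)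
    (β θ : ℕ → ℂ) (hα : 0 < α.re)
    (hmono : ∀ i j : ℕ, i < j → j ≤ m → (β j).re < (β i).re)
    (T : ℝ) (hT : 0 < T) (ψ : ℝ → ℝ) (hψ : ContDiff ℝ 1 ψ) (hψ0 : ψ 0 = 0)
    (hψ' : ∀ s ∈ Set.Icc 0 T, 0 < deriv ψ s)
    (σ : ℕ → ℝ → ℂ) (g : ℝ → ℂ)
    (hσ : ∀ i, 1 ≤ i → i ≤ m → ContinuousOn (σ i) (Set.Icc 0 T))
    (hg : ContinuousOn g (Set.Icc 0 T)) :
    ∃ u : ℝ → ℂ,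
      ContinuousOn u (Set.Icc 0 T) ∧
      (∀ t ∈ Set.Icc 0 T,
        u t + ∑ i ∈ Finset.Icc 1 m,
          σ i t * prabIPsi α (β 0 - β i) (θ 0 - θ i) ω 0 ψ u t = g t) ∧
      (∀ u' : ℝ → ℂ, ContinuousOn u' (Set.Icc 0 T) →
        (∀ t ∈ Set.Icc 0 T,
          u' t + ∑ i ∈ Finset.Icc 1 m,
            σ i t * prabIPsi α (β 0 - β i) (θ 0 - θ i) ω 0 ψ u' t = g t) →
        Set.EqOn u' u (Set.Icc 0 T)) ∧
      TendstoUniformlyOn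
        (fun N t => ∑ k ∈ Finset.range N, (-1 : ℂ) ^ k * (opAPsi α ω β θ m σ ψ)^[k] g t)
        u atTop (Set.Icc 0 T) := by
  set δ := min 1 ((β 0).re - (β 1).re)
  have hδ : 0 < δ := lt_min one_pos (sub_pos.2 (hmono 0 1 one_pos hm))
  have hδβ : ∀ i ∈ Finset.Icc 1 m, δ ≤ (β 0 - β i).re := fun i hi => by
    obtain ⟨h1, him⟩ := Finset.mem_Icc.1 hi
    have : (β i).re ≤ (β 1).re :=
      h1.eq_or_lt.elim (fun h => h ▸ le_rfl) fun h => (hmono 1 i h him).le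
    rw [Complex.sub_re]
    linarith [min_le_right 1 ((β 0).re - (β 1).re)]
  choose! M hM0 hM using fun i (hi : i ∈ Finset.Icc 1 m) =>
    exists_norm_prabKernel_le hα hδ (hδβ i hi) (θ 0 - θ i) ω (ψ T)
  -- `opAPsi α ω β θ m σ ψ` is definitionally `volterraSum (Finset.Icc 1 m) σ K ψ` with
  -- `K i = prabKernel α (β 0 - β i) (θ 0 - θ i) ω`
  exact exists_solution_add_volterraSum_eq hT.le ⟨hψ, hψ0, hψ'⟩
    (fun i hi => hσ i (Finset.mem_Icc.1 hi).1 (Finset.mem_Icc.1 hi).2)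
    (fun i hi => continuousOn_prabKernel hα (hδ.trans_le (hδβ i hi)) _ _) hM hM0 hδ
    (min_le_left _ _) hg

/-- Core of Theorem 3.4: the integral equation with respect to a function `ψ`. Under the
stated hypotheses there is a unique continuous `u : [0,T] → ℂ` with
`u(t) + ∑_{i=1}^m σᵢ(t)·(𝕀^{θ₀−θᵢ;ψ}_{α,β₀−βᵢ,ω;0} u)(t) = g(t)` on `[0,T]`; moreover `u`
is the uniform limit on `[0,T]` of the partial sums of `∑_k (−1)^k A_ψ^k g`. -/
theorem integral_equation_wrt_function_unique_solution (m : ℕ) (hm : 1 ≤ m) (α ω : ℂ)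
    (β θ : ℕ → ℂ) (hα : 0 < α.re) (hβm : 0 ≤ (β m).re)
    (hmono : ∀ i j : ℕ, i < j → j ≤ m → (β j).re < (β i).re)
    (T : ℝ) (hT : 0 < T) (ψ : ℝ → ℝ) (hψ : ContDiff ℝ 1 ψ) (hψ0 : ψ 0 = 0)
    (hψ' : ∀ s ∈ Set.Icc 0 T, 0 < deriv ψ s)
    (σ : ℕ → ℝ → ℂ) (g : ℝ → ℂ)
    (hσ : ∀ i, 1 ≤ i → i ≤ m → ContinuousOn (σ i) (Set.Icc 0 T))
    (hg : ContinuousOn g (Set.Icc 0 T)) :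
    ∃ u : ℝ → ℂ,
      ContinuousOn u (Set.Icc 0 T) ∧
      (∀ t ∈ Set.Icc 0 T,
        u t + ∑ i ∈ Finset.Icc 1 m,
          σ i t * prabIPsi α (β 0 - β i) (θ 0 - θ i) ω 0 ψ u t = g t) ∧
      (∀ u' : ℝ → ℂ, ContinuousOn u' (Set.Icc 0 T) →
        (∀ t ∈ Set.Icc 0 T,
          u' t + ∑ i ∈ Finset.Icc 1 m,
            σ i t * prabIPsi α (β 0 - β i) (θ 0 - θ i) ω 0 ψ u' t = g t) →
        Set.EqOn u' u (Set.Icc 0 T)) ∧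
      TendstoUniformlyOn
        (fun N t => ∑ k ∈ Finset.range N, (-1 : ℂ) ^ k * (opAPsi α ω β θ m σ ψ)^[k] g t)
        u atTop (Set.Icc 0 T) :=
  integral_equation_wrt_function_unique_solution_general m hm α ω β θ hα hmono T hT ψ hψ hψ0 hψ' σ g
    hσ hg

end
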